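/- Let F be a number field of odd degree n in which 2 is totally ramified and 3 splits completely. Let 𝔮 be the unique prime of O_F above 2 and S = {𝔮}. Then every solution (λ, μ) to the S-unit equation λ + μ = 1 with λ, μ ∈ O_S^× satisfies max{|ord_𝔮(λ)|, |ord_𝔮(μ)|} < 2·ord_𝔮(2) = 2n. -/

import Mathlib

/-!
Suppose `ord_𝔮 λ ≥ 2n`. Then `λ` is an algebraic integer divisible by `𝔮^{2n} = (4)`, and
`μ = 1 - λ` is a unit of `𝓞 F` with `μ ≡ 1 mod 4`, so `N(μ) ≡ 1 mod 4`. At each prime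
`P ∣ 3` the residue field is `𝔽₃` and neither `λ` nor `μ` vanishes there, which forces
`μ ≡ -1 mod P`; as `3` is unramified, `μ ≡ -1 mod 3` and `N(μ) ≡ (-1)^n = -1 mod 3`.
No unit norm `±1` satisfies both congruences. Applying this to `(λ, μ)`, `(μ, λ)`,
`(1/λ, -μ/λ)` and `(1/μ, -λ/μ)` bounds `|ord_𝔮|` on both sides.
-/

open IsDedekindDomain NumberField

/-- The `𝔮`-adic valuation `ord_𝔮 : F → ℤ` (junk value `0` at `x = 0`). -/
noncomputable def ordQ {K : Type*} [Field K] [NumberField K]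
    (v : HeightOneSpectrum (𝓞 K)) (x : K) : ℤ :=
  if h : v.valuation K x = 0 then 0
  else - Multiplicative.toAdd (WithZero.unzero h)

theorem Algebra.map_norm_algebraMap_add_mul {R S T : Type*} [CommRing R] [CommRing S]
    [CommRing T] [Nontrivial R] [Algebra R S] [Module.Free R S] [Module.Finite R S]
    (φ : R →+* T) {q : R} (hq : φ q = 0) (a : R) (t : S) :
    φ (Algebra.norm R (algebraMap R S a + algebraMap R S q * t)) = φ a ^ Module.finrank R S := by
  classical
  let B := Module.Free.chooseBasis R S
  have hmat : φ.mapMatrix (Algebra.leftMulMatrix B (algebraMap R S a + algebraMap R S q * t)) =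
      Matrix.diagonal fun _ => φ a := by
    rw [map_add, map_mul, AlgHom.commutes, AlgHom.commutes, map_add, map_mul]
    ext i j
    simp [Matrix.algebraMap_eq_diagonal, Matrix.diagonal_map, hq, Matrix.diagonal_apply]
  rw [Algebra.norm_eq_matrix_det B, RingHom.map_det, hmat, Matrix.det_diagonal, Finset.prod_const,
    Finset.card_univ, Module.finrank_eq_card_chooseBasisIndex]

theorem not_isUnit_of_four_dvd_sub_one_of_three_dvd_add_one {S : Type*} [CommRing S]
    [Module.Free ℤ S] [Module.Finite ℤ S] (hodd : Odd (Module.finrank ℤ S)) {u : S}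
    (h4 : (4 : S) ∣ u - 1) (h3 : (3 : S) ∣ u + 1) : ¬IsUnit u := by
  intro hu
  obtain ⟨t, ht⟩ := h4
  obtain ⟨s, hs⟩ := h3
  have hmod4 : ((Algebra.norm ℤ u : ℤ) : ZMod 4) = 1 := by
    have h := Algebra.map_norm_algebraMap_add_mul (Int.castRingHom (ZMod 4)) (q := 4) (by decide)
      1 t
    rwa [map_one, map_ofNat, show 1 + 4 * t = u by linear_combination -ht, map_one, one_pow] at h
  have hmod3 : ((Algebra.norm ℤ u : ℤ) : ZMod 3) = -1 := by
    have h := Algebra.map_norm_algebraMap_add_mul (Int.castRingHom (ZMod 3)) (q := 3) (by decide)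
      (-1) s
    rwa [map_neg, map_one, map_ofNat, show -1 + 3 * s = u by linear_combination -hs, map_neg,
      map_one, hodd.neg_one_pow] at h
  rcases Int.isUnit_iff.mp (hu.map (Algebra.norm ℤ)) with h | h
  · rw [h] at hmod3; revert hmod3; decide
  · rw [h] at hmod4; revert hmod4; decide

theorem eq_neg_one_of_natCard_eq_three {k : Type*} [Field k] (hk : Nat.card k = 3) {x : k}
    (h0 : x ≠ 0) (h1 : x ≠ 1) : x = -1 := by
  have : Fintype k := @Fintype.ofFinite k (Nat.finite_of_card_ne_zero (by omega))
  have hx : x * (x - 1) * (x + 1) = 0 := by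
    have := FiniteField.pow_card x
    rw [← Nat.card_eq_fintype_card, hk] at this
    linear_combination this
  rcases mul_eq_zero.mp hx with hx | hx
  · rcases mul_eq_zero.mp hx with hx | hx
    · exact absurd hx h0
    · exact absurd (sub_eq_zero.mp hx) h1
  · exact eq_neg_of_add_eq_zero_left hx

theorem Ideal.mem_of_squarefree_of_forall_isPrime {R : Type*} [CommRing R] [IsDedekindDomain R]
    {J : Ideal R} (hJ : Squarefree J) {x : R} (hx : ∀ P : Ideal R, P.IsPrime → J ≤ P → x ∈ P) :
    x ∈ J := by
  obtain ⟨k, hk⟩ : x ∈ J.radical := by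
    rw [Ideal.radical_eq_sInf]
    exact Submodule.mem_sInf.mpr fun P ⟨hJP, hP⟩ => hx P hP hJP
  have : J ∣ Ideal.span {x} ^ k := by
    rw [Ideal.span_singleton_pow, Ideal.dvd_span_singleton]; exact hk
  exact Ideal.dvd_span_singleton.mp (hJ.isRadical k _ this)

open UniqueFactorizationMonoid in
theorem Ideal.squarefree_map_of_ramificationIdx'_eq_one {R S : Type*} [CommRing R] [CommRing S]
    [IsDedekindDomain S] [Algebra R S] {p : Ideal R} (hp : p.map (algebraMap R S) ≠ ⊥)
    (he : ∀ P : Ideal S, P.IsPrime → p.map (algebraMap R S) ≤ P → p.ramificationIdx' P = 1) :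
    Squarefree (p.map (algebraMap R S)) := by
  classical
  rw [squarefree_iff_nodup_normalizedFactors hp, Multiset.nodup_iff_count_le_one]
  intro P
  by_cases hP : P ∈ normalizedFactors (p.map (algebraMap R S))
  · have hPprime := Ideal.isPrime_of_prime (prime_of_normalized_factor P hP)
    have hle := Ideal.le_of_dvd (dvd_of_mem_normalizedFactors hP)
    have hP0 : P ≠ ⊥ := by rintro rfl; exact hp (le_bot_iff.mp hle)
    rw [← IsDedekindDomain.ramificationIdx'_eq_normalizedFactors_count hp hPprime hP0,
      he P hPprime hle]
  · rw [Multiset.count_eq_zero_of_notMem hP]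
    exact zero_le_one

theorem Ideal.natCard_quotient_eq_pow_inertiaDeg' {S : Type*} [CommRing S] [IsDedekindDomain S]
    [Module.Free ℤ S] [Module.Finite ℤ S] {p : ℕ} (hp : p.Prime) {P : Ideal S} [P.IsPrime]
    (hpP : (p : S) ∈ P) : Nat.card (S ⧸ P) = p ^ (span {(p : ℤ)}).inertiaDeg' P := by
  have : P.LiesOver (span {(p : ℤ)}) :=
    (liesOver_span_iff IsPrime.ne_top' (Nat.prime_iff_prime_int.mp hp)).mpr (by simpa using hpP)
  rw [← absNorm_eq_pow_inertiaDeg' P hp, absNorm_apply, Submodule.cardQuot_apply]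

theorem Ideal.add_one_mem_of_natCard_quotient_eq_three {S : Type*} [CommRing S] {P : Ideal S}
    [P.IsMaximal] (hP : Nat.card (S ⧸ P) = 3) {u : S} (hu : u ∉ P) (hu' : 1 - u ∉ P) :
    u + 1 ∈ P := by
  let := Quotient.field P
  have h0 : Quotient.mk P u ≠ 0 := by rwa [Ne, Quotient.eq_zero_iff_mem]
  have h1 : Quotient.mk P u ≠ 1 := fun h => hu' (Quotient.eq.mp (by rw [map_one, h]))
  rw [← Quotient.eq_zero_iff_mem, map_add, map_one, eq_neg_one_of_natCard_eq_three hP h0 h1,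
    neg_add_cancel]

theorem three_dvd_add_one_of_splits_completely {S : Type*} [CommRing S] [IsDedekindDomain S]
    [CharZero S] [Module.Free ℤ S] [Module.Finite ℤ S]
    (hsplit : ∀ P : Ideal S, P.IsPrime → (3 : S) ∈ P →
      Ideal.ramificationIdx' (Ideal.span {(3 : ℤ)}) P = 1 ∧
      Ideal.inertiaDeg' (Ideal.span {(3 : ℤ)}) P = 1)
    {u : S} (hu : ∀ P : Ideal S, P.IsPrime → (3 : S) ∈ P → u ∉ P ∧ 1 - u ∉ P) :
    (3 : S) ∣ u + 1 := by
  have h30 : (3 : S) ≠ 0 := by norm_num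
  have hmap : (Ideal.span {(3 : ℤ)}).map (algebraMap ℤ S) = Ideal.span {(3 : S)} := by
    simp [Ideal.map_span]
  have hsq : Squarefree (Ideal.span {(3 : S)}) := by
    have hne : (Ideal.span {(3 : ℤ)}).map (algebraMap ℤ S) ≠ ⊥ := by
      rwa [hmap, Ne, Ideal.span_singleton_eq_bot]
    rw [← hmap]
    refine Ideal.squarefree_map_of_ramificationIdx'_eq_one hne fun P hP hle => (hsplit P hP ?_).1
    rw [hmap] at hle
    exact hle (Ideal.mem_span_singleton_self _)
  rw [← Ideal.mem_span_singleton]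
  refine Ideal.mem_of_squarefree_of_forall_isPrime hsq fun P hP h3P => ?_
  have h3 : (3 : S) ∈ P := h3P (Ideal.mem_span_singleton_self _)
  have : P.IsMaximal := hP.isMaximal (by rintro rfl; exact h30 h3)
  refine Ideal.add_one_mem_of_natCard_quotient_eq_three ?_ (hu P hP h3).1 (hu P hP h3).2
  rw [Ideal.natCard_quotient_eq_pow_inertiaDeg' Nat.prime_three (by exact_mod_cast h3),
    Nat.cast_ofNat, (hsplit P hP h3).2, pow_one]

theorem not_isUnit_one_sub_of_four_dvd {S : Type*} [CommRing S] [IsDedekindDomain S]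
    [CharZero S] [Module.Free ℤ S] [Module.Finite ℤ S] (hodd : Odd (Module.finrank ℤ S))
    (hsplit : ∀ P : Ideal S, P.IsPrime → (3 : S) ∈ P →
      Ideal.ramificationIdx' (Ideal.span {(3 : ℤ)}) P = 1 ∧
      Ideal.inertiaDeg' (Ideal.span {(3 : ℤ)}) P = 1)
    {l : S} (h4 : (4 : S) ∣ l) (hl : ∀ P : Ideal S, P.IsPrime → (3 : S) ∈ P → l ∉ P) :
    ¬IsUnit (1 - l) := by
  intro hunit
  have h3 : (3 : S) ∣ (1 - l) + 1 :=
    three_dvd_add_one_of_splits_completely hsplit fun P hP h3P =>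
      ⟨fun h => hP.ne_top (Ideal.eq_top_of_isUnit_mem _ h hunit),
        by rw [sub_sub_cancel]; exact hl P hP h3P⟩
  refine not_isUnit_of_four_dvd_sub_one_of_three_dvd_add_one hodd ?_ h3 hunit
  rw [sub_sub_cancel_left]
  exact dvd_neg.mpr h4

namespace IsDedekindDomain.HeightOneSpectrum

theorem isUnit_of_forall_notMem {R : Type*} [CommRing R] {r : R}
    (hr : r ≠ 0) (h : ∀ v : HeightOneSpectrum R, r ∉ v.asIdeal) : IsUnit r := by
  by_contra hu
  obtain ⟨M, hM, hrM⟩ := Ideal.exists_le_maximal _ (mt Ideal.span_singleton_eq_top.mp hu)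
  have hM0 : M ≠ ⊥ := fun h0 => hr (Ideal.span_singleton_eq_bot.mp (le_bot_iff.mp (h0 ▸ hrM)))
  exact h ⟨M, hM.isPrime, hM0⟩ (hrM (Ideal.mem_span_singleton_self r))

theorem ne_of_two_mem_of_three_mem {R : Type*} [CommRing R] {v w : HeightOneSpectrum R}
    (hv : (2 : R) ∈ v.asIdeal) (hw : (3 : R) ∈ w.asIdeal) : v ≠ w := by
  rintro rfl
  exact v.isPrime.ne_top ((Ideal.eq_top_iff_one _).mpr
    (by simpa [show (3 : R) - 2 = 1 by norm_num] using sub_mem hw hv))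

end IsDedekindDomain.HeightOneSpectrum

section ordQ

variable {K : Type*} [Field K] [NumberField K] (v : HeightOneSpectrum (𝓞 K))

open WithZero HeightOneSpectrum

theorem ordQ_eq_neg_log (x : K) : ordQ v x = -log (v.valuation K x) := by
  unfold ordQ
  split_ifs with h
  · simp [h]
  · rw [toAdd_unzero_eq_log]

theorem valuation_eq_exp_neg_ordQ {x : K} (hx : x ≠ 0) :
    v.valuation K x = exp (-ordQ v x) := by
  rw [ordQ_eq_neg_log, neg_neg, exp_log ((Valuation.ne_zero_iff _).mpr hx)]

theorem ordQ_inv (x : K) : ordQ v x⁻¹ = -ordQ v x := by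
  rw [ordQ_eq_neg_log, ordQ_eq_neg_log, map_inv₀, log_inv]

theorem ordQ_algebraMap_of_span_eq_pow {r : 𝓞 K} {n : ℕ}
    (h : Ideal.span {r} = v.asIdeal ^ n) : ordQ v (algebraMap (𝓞 K) K r) = n := by
  have hr : r ≠ 0 := by
    rintro rfl
    exact pow_ne_zero n v.ne_bot (by simpa using h.symm)
  rw [ordQ_eq_neg_log, valuation_of_algebraMap, intValuation_eq_exp_neg_multiplicity _ hr, h,
    multiplicity_pow_self v.ne_bot (Ideal.isUnit_iff.not.mpr v.isPrime.ne_top), log_exp, neg_neg]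

theorem exists_mem_pow_of_le_ordQ {x : K} (hx : x ≠ 0)
    (hxv : ∀ w : HeightOneSpectrum (𝓞 K), w ≠ v → w.valuation K x ≤ 1) {k : ℕ}
    (hk : (k : ℤ) ≤ ordQ v x) : ∃ r ∈ v.asIdeal ^ k, algebraMap (𝓞 K) K r = x := by
  have hv : v.valuation K x ≤ exp (-(k : ℤ)) := by
    rw [valuation_eq_exp_neg_ordQ v hx, exp_le_exp]
    omega
  obtain ⟨r, rfl⟩ := mem_integers_of_valuation_le_one K x fun w => by
    rcases eq_or_ne w v with hw | hw
    · exact hw ▸ hv.trans (by rw [← exp_zero, exp_le_exp]; omega)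
    · exact hxv w hw
  rw [valuation_of_algebraMap, intValuation_le_pow_iff_mem] at hv
  exact ⟨r, hv, rfl⟩

end ordQ

section SUnitEquation

open HeightOneSpectrum

variable {F : Type*} [Field F] [NumberField F] {n : ℕ} {𝔮 : HeightOneSpectrum (𝓞 F)}

theorem ordQ_lt_two_mul_of_add_eq_one (hn : Module.finrank ℚ F = n) (hnodd : Odd n)
    (hram : Ideal.span {(2 : 𝓞 F)} = 𝔮.asIdeal ^ n)
    (hsplit : ∀ P : Ideal (𝓞 F), P.IsPrime → (3 : 𝓞 F) ∈ P →
      Ideal.ramificationIdx' (Ideal.span {(3 : ℤ)}) P = 1 ∧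
      Ideal.inertiaDeg' (Ideal.span {(3 : ℤ)}) P = 1)
    {lam mu : Fˣ} (hlam : lam ∈ ({𝔮} : Set (HeightOneSpectrum (𝓞 F))).unit F)
    (hmu : mu ∈ ({𝔮} : Set (HeightOneSpectrum (𝓞 F))).unit F)
    (hsum : (lam : F) + (mu : F) = 1) :
    ordQ 𝔮 (lam : F) < 2 * n := by
  by_contra! hle
  have h2 : (2 : 𝓞 F) ∈ 𝔮.asIdeal :=
    Ideal.pow_le_self hnodd.pos.ne' (hram ▸ Ideal.mem_span_singleton_self 2)
  obtain ⟨l, hl𝔮, hl⟩ := exists_mem_pow_of_le_ordQ 𝔮 lam.ne_zero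
    (fun w hw => (hlam w (by simpa using hw)).le) (k := 2 * n) (by push_cast; exact hle)
  have h4 : (4 : 𝓞 F) ∣ l := by
    rw [← Ideal.mem_span_singleton, show (4 : 𝓞 F) = 2 * 2 by norm_num,
      ← Ideal.span_singleton_mul_span_singleton, hram, ← pow_add, ← two_mul]
    exact hl𝔮
  have hl_notMem (P : Ideal (𝓞 F)) (hP : P.IsPrime) (h3P : (3 : 𝓞 F) ∈ P) : l ∉ P := by
    have hP0 : P ≠ ⊥ := by rintro rfl; exact (by norm_num : (3 : 𝓞 F) ≠ 0) (Ideal.mem_bot.mp h3P)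
    let w : HeightOneSpectrum (𝓞 F) := ⟨P, hP, hP0⟩
    have hw : w ≠ 𝔮 := (ne_of_two_mem_of_three_mem h2 h3P).symm
    exact (w.valuation_eq_one_iff_notMem (K := F)).mp (hl ▸ hlam w (by simpa using hw))
  have hu_notMem (w : HeightOneSpectrum (𝓞 F)) : 1 - l ∉ w.asIdeal := by
    rcases eq_or_ne w 𝔮 with rfl | hw
    · intro h
      have hl1 : l ∈ w.asIdeal := Ideal.pow_le_self (mul_ne_zero two_ne_zero hnodd.pos.ne') hl𝔮
      exact w.isPrime.ne_top ((Ideal.eq_top_iff_one _).mpr (by simpa using add_mem h hl1))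
    · refine (w.valuation_eq_one_iff_notMem (K := F)).mp ?_
      rw [map_sub, map_one, hl, ← hsum, add_sub_cancel_left]
      exact hmu w (by simpa using hw)
  exact not_isUnit_one_sub_of_four_dvd (by rwa [RingOfIntegers.rank, hn]) hsplit h4 hl_notMem
    (isUnit_of_forall_notMem (fun h => hu_notMem 𝔮 (h ▸ 𝔮.asIdeal.zero_mem)) hu_notMem)

theorem abs_ordQ_lt_two_mul_of_add_eq_one (hn : Module.finrank ℚ F = n) (hnodd : Odd n)
    (hram : Ideal.span {(2 : 𝓞 F)} = 𝔮.asIdeal ^ n)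
    (hsplit : ∀ P : Ideal (𝓞 F), P.IsPrime → (3 : 𝓞 F) ∈ P →
      Ideal.ramificationIdx' (Ideal.span {(3 : ℤ)}) P = 1 ∧
      Ideal.inertiaDeg' (Ideal.span {(3 : ℤ)}) P = 1)
    {lam mu : Fˣ} (hlam : lam ∈ ({𝔮} : Set (HeightOneSpectrum (𝓞 F))).unit F)
    (hmu : mu ∈ ({𝔮} : Set (HeightOneSpectrum (𝓞 F))).unit F)
    (hsum : (lam : F) + (mu : F) = 1) :
    |ordQ 𝔮 (lam : F)| < 2 * n := by
  have hneg : (-1 : Fˣ) ∈ ({𝔮} : Set (HeightOneSpectrum (𝓞 F))).unit F := fun w _ => by simp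
  have hinv := ordQ_lt_two_mul_of_add_eq_one hn hnodd hram hsplit (inv_mem hlam)
    (mul_mem hneg (mul_mem hmu (inv_mem hlam))) (by
      simp only [Units.val_mul, Units.val_neg, Units.val_one, Units.val_inv_eq_inv_val]
      field_simp [lam.ne_zero]
      linear_combination -hsum)
  rw [Units.val_inv_eq_inv_val, ordQ_inv] at hinv
  exact abs_lt.mpr ⟨by linarith, ordQ_lt_two_mul_of_add_eq_one hn hnodd hram hsplit hlam hmu hsum⟩

end SUnitEquation

/-- Let `F` be a number field of odd degree `n` in which `2` is
totally ramified (`2𝓞 F = 𝔮^n`) and `3` splits completely.  With `S = {𝔮}`, every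
solution `(λ, μ)` of the `S`-unit equation `λ + μ = 1` satisfies
`max(|ord_𝔮 λ|, |ord_𝔮 μ|) < 2·ord_𝔮(2) = 2n`. -/
theorem sunit_solution_ord_lt_two_n
    (F : Type*) [Field F] [NumberField F] (n : ℕ) (hn : Module.finrank ℚ F = n)
    (hnodd : Odd n)
    (𝔮 : HeightOneSpectrum (𝓞 F))
    (hram : Ideal.span {(2 : 𝓞 F)} = 𝔮.asIdeal ^ n)
    (hsplit : ∀ P : Ideal (𝓞 F), P.IsPrime → (3 : 𝓞 F) ∈ P →
      Ideal.ramificationIdx' (Ideal.span {(3 : ℤ)}) P = 1 ∧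
      Ideal.inertiaDeg' (Ideal.span {(3 : ℤ)}) P = 1)
    (lam mu : Fˣ)
    (hlam : lam ∈ ({𝔮} : Set (HeightOneSpectrum (𝓞 F))).unit F)
    (hmu : mu ∈ ({𝔮} : Set (HeightOneSpectrum (𝓞 F))).unit F)
    (hsum : (lam : F) + (mu : F) = 1) :
    max |ordQ 𝔮 (lam : F)| |ordQ 𝔮 (mu : F)| < 2 * ordQ 𝔮 (2 : F) ∧
      2 * ordQ 𝔮 (2 : F) = 2 * n := by
  have h2 : ordQ 𝔮 (2 : F) = n := by
    simpa only [map_ofNat] using ordQ_algebraMap_of_span_eq_pow 𝔮 hram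
  rw [h2]
  refine ⟨max_lt ?_ ?_, rfl⟩
  · exact abs_ordQ_lt_two_mul_of_add_eq_one hn hnodd hram hsplit hlam hmu hsum
  · exact abs_ordQ_lt_two_mul_of_add_eq_one hn hnodd hram hsplit hmu hlam
      (by rw [add_comm, hsum])
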